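/- Let R be a weighted unilateral shift on ℓ²(ℕ) with weights (c_k)_{k≥1} satisfying c_k ∈ (0,1] for all k, and set T = (R + R*)/2, which is a self-adjoint operator with ‖T‖ ≤ 1. Suppose that e_0 lies in the range of √(1 − T²), the continuous functional calculus square root of the positive operator 1 − T². Let μ be a finite Borel measure on ℝ supported in [−1,1] satisfying ∫ t^n dμ(t) = Re⟨e_0, T^n e_0⟩ for all n ∈ ℕ. Then the function t ↦ log(1 − t)/(1 − t²) is μ-integrable on (−1,1); in particular ∫ log(1 − t)/(1 − t²) dμ(t) > −∞. -/

import Mathlib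

set_option synthInstance.maxHeartbeats 1000000
set_option maxHeartbeats 1000000
open MeasureTheory
open scoped InnerProductSpace ComplexOrder

noncomputable abbrev ell2 : Type := lp (fun _ : ℕ => ℂ) 2

noncomputable instance ell2CLM_selfAdjointCFC :
    ContinuousFunctionalCalculus ℝ (ell2 →L[ℂ] ell2) IsSelfAdjoint :=
  IsSelfAdjoint.instContinuousFunctionalCalculus

/-- The canonical orthonormal basis vectors of `ℓ²(ℕ)`. -/
noncomputable def e (k : ℕ) : ell2 := lp.single 2 k 1

/-! Write `T = ℜ R`. As the weights lie in `[0, 1]`, the coordinates of `Tⁿ e₀` are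
dominated by those for the unweighted shift, which count the nonnegative `±1`-paths of
length `n` divided by `2ⁿ`. Hence the even moments of `μ` satisfy
`∫ t^{2k} dμ ≤ Catalan(k) / 4^k ≤ (k + 1)^{-3/2}`. On the other hand, with `u = t²`,
`|log (1 - t)| / (1 - t²) ≤ (log 2 - log (1 - u)) / (1 - u) = ∑ (log 2 + H_n) uⁿ`
(`H_n` the harmonic numbers), so by monotone convergence the integral is at most
`∑ (log 2 + H_n) (n + 1)^{-3/2} < ∞`. -/

open Real Set

lemma inner_e_left (k : ℕ) (x : ell2) : ⟪e k, x⟫_ℂ = x k := by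
  simp [e, lp.inner_single_left]

lemma e_apply (k m : ℕ) : e k m = if m = k then 1 else 0 := by
  simp [e, lp.single_apply, Pi.single_apply]

lemma inv_two_smul_add_adjoint_eq_realPart {E : Type*} [NormedAddCommGroup E]
    [InnerProductSpace ℂ E] [CompleteSpace E] (A : E →L[ℂ] E) :
    (2 : ℂ)⁻¹ • (A + ContinuousLinearMap.adjoint A) = (realPart A : E →L[ℂ] E) := by
  rw [realPart_apply_coe, ← ContinuousLinearMap.star_eq_adjoint, ← Complex.coe_smul]
  norm_num

/-- The number of `±1`-paths of length `n` from `0` to `j` that stay nonnegative, by the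
reflection principle. -/
noncomputable def ballot (n j : ℕ) : ℝ :=
  if Even (n + j) then (n.choose ((n + j) / 2) : ℝ) - n.choose ((n + j) / 2 + 1) else 0

lemma ballot_zero_left (j : ℕ) : ballot 0 j = if j = 0 then 1 else 0 := by
  rcases Nat.eq_zero_or_pos j with rfl | hj
  · simp [ballot]
  · simp only [ballot, zero_add, hj.ne', if_false, ite_eq_right_iff]
    rintro ⟨m, rfl⟩
    simp [Nat.choose_eq_zero_of_lt, show 0 < (m + m) / 2 by omega]

lemma ballot_succ_succ (n j : ℕ) : ballot (n + 1) (j + 1) = ballot n j + ballot n (j + 2) := by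
  rcases Nat.even_or_odd (n + j) with ⟨a, ha⟩ | hodd
  · have h1 : (n + 1 + (j + 1)) / 2 = a + 1 := by omega
    have h2 : (n + (j + 2)) / 2 = a + 1 := by omega
    have h3 : (n + j) / 2 = a := by omega
    simp only [ballot, show Even (n + 1 + (j + 1)) from ⟨a + 1, by omega⟩,
      show Even (n + (j + 2)) from ⟨a + 1, by omega⟩, show Even (n + j) from ⟨a, ha⟩,
      if_true, h1, h2, h3, Nat.choose_succ_succ, Nat.cast_add]
    ring
  · have : ¬ Even (n + 1 + (j + 1)) := by rw [Nat.not_even_iff_odd]; grind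
    simp [ballot, this, Nat.not_even_iff_odd.2 hodd, show ¬ Even (n + (j + 2)) by grind]

lemma ballot_succ_zero (n : ℕ) : ballot (n + 1) 0 = ballot n 1 := by
  rcases Nat.even_or_odd n with hev | ⟨a, rfl⟩
  · have : ¬ Even (n + 1) := by simpa [Nat.even_add_one] using hev
    simp [ballot, this]
  · have hsymm : (2 * a + 1).choose a = (2 * a + 1).choose (a + 1) := by
      rw [← Nat.choose_symm (by omega : a + 1 ≤ 2 * a + 1)]; congr 1; omega
    simp only [ballot, show Even (2 * a + 1 + 1 + 0) from ⟨a + 1, by omega⟩, if_true,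
      show (2 * a + 1 + 1 + 0) / 2 = a + 1 by omega]
    rw [Nat.choose_succ_succ (2 * a + 1) a, Nat.choose_succ_succ (2 * a + 1) (a + 1), hsymm]
    push_cast
    ring

lemma ballot_two_mul_zero (k : ℕ) : ballot (2 * k) 0 = catalan k := by
  have hsucc := Nat.choose_succ_right_eq (2 * k) k
  have hcat := succ_mul_catalan_eq_centralBinom k
  rw [Nat.centralBinom_eq_two_mul_choose, show 2 * k - k = k by omega] at *
  have hk : ((k : ℝ) + 1) ≠ 0 := by positivity
  apply mul_left_cancel₀ hk
  simp only [ballot, add_zero, even_two_mul, if_true, Nat.mul_div_cancel_left k two_pos]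
  have h1 : ((2 * k).choose (k + 1) : ℝ) * (k + 1) = (2 * k).choose k * k := by
    exact_mod_cast hsucc
  have h2 : ((k : ℝ) + 1) * catalan k = (2 * k).choose k := by exact_mod_cast hcat
  linear_combination -h1 - h2

lemma centralBinom_sq_mul_le (k : ℕ) : k.centralBinom ^ 2 * (2 * k + 1) ≤ 16 ^ k := by
  induction k with
  | zero => simp
  | succ k ih =>
    refine Nat.le_of_mul_le_mul_left ?_ (by positivity : 0 < (k + 1) ^ 2)
    calc (k + 1) ^ 2 * ((k + 1).centralBinom ^ 2 * (2 * (k + 1) + 1))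
        = ((k + 1) * (k + 1).centralBinom) ^ 2 * (2 * k + 3) := by ring
      _ = (4 * (2 * k + 1) * (2 * k + 3)) * (k.centralBinom ^ 2 * (2 * k + 1)) := by
        rw [Nat.succ_mul_centralBinom_succ]; ring
      _ ≤ (16 * (k + 1) ^ 2) * 16 ^ k := Nat.mul_le_mul (by nlinarith) ih
      _ = (k + 1) ^ 2 * 16 ^ (k + 1) := by ring

lemma catalan_div_four_pow_le (k : ℕ) :
    (catalan k : ℝ) / 4 ^ k ≤ ((k : ℝ) + 1) ^ (-(3 / 2 : ℝ)) := by
  have hk : (0 : ℝ) < k + 1 := by positivity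
  have hcat : catalan k ^ 2 * (k + 1) ^ 3 ≤ 16 ^ k := by
    calc catalan k ^ 2 * (k + 1) ^ 3 = ((k + 1) * catalan k) ^ 2 * (k + 1) := by ring
      _ ≤ k.centralBinom ^ 2 * (2 * k + 1) := by
        rw [succ_mul_catalan_eq_centralBinom]; gcongr; omega
      _ ≤ 16 ^ k := centralBinom_sq_mul_le k
  have hsq : (((k : ℝ) + 1) ^ (-(3 / 2 : ℝ))) ^ 2 = 1 / ((k : ℝ) + 1) ^ 3 := by
    rw [← Real.rpow_natCast, ← Real.rpow_mul hk.le, one_div, ← Real.rpow_natCast,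
      ← Real.rpow_neg hk.le]
    norm_num
  refine (pow_le_pow_iff_left₀ (by positivity) (by positivity) two_ne_zero).1 ?_
  rw [hsq, div_pow, ← pow_mul, show (4 : ℝ) ^ (k * 2) = 16 ^ k by rw [pow_mul']; norm_num,
    div_le_div_iff₀ (by positivity) (by positivity), one_mul]
  exact_mod_cast hcat

/-- The coordinates of `Tⁿ e₀`, where `T` is the tridiagonal operator with zero diagonal and
off-diagonal entries `c (j + 1) / 2`. -/
noncomputable def orbitCoord (c : ℕ → ℝ) : ℕ → ℕ → ℝ
  | 0, j => if j = 0 then 1 else 0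
  | n + 1, 0 => c 1 / 2 * orbitCoord c n 1
  | n + 1, j + 1 => c (j + 1) / 2 * orbitCoord c n j + c (j + 2) / 2 * orbitCoord c n (j + 2)

lemma orbitCoord_nonneg {c : ℕ → ℝ} (hc : ∀ k, 0 ≤ c (k + 1)) (n j : ℕ) :
    0 ≤ orbitCoord c n j := by
  induction n generalizing j with
  | zero => unfold orbitCoord; positivity
  | succ n ih =>
    cases j with
    | zero => have := hc 0; have := ih 1; unfold orbitCoord; positivity
    | succ j =>
      have := hc j; have := hc (j + 1); have := ih j; have := ih (j + 2)
      unfold orbitCoord; positivity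

lemma orbitCoord_mul_two_pow_le_ballot {c : ℕ → ℝ}
    (hc : ∀ k, 0 ≤ c (k + 1) ∧ c (k + 1) ≤ 1) (n j : ℕ) :
    orbitCoord c n j * 2 ^ n ≤ ballot n j := by
  induction n generalizing j with
  | zero => simp [orbitCoord, ballot_zero_left]
  | succ n ih =>
    have hle (k m : ℕ) : c (k + 1) * (orbitCoord c n m * 2 ^ n) ≤ ballot n m :=
      (mul_le_of_le_one_left (by have := orbitCoord_nonneg (fun k => (hc k).1) n m; positivity)
        (hc k).2).trans (ih m)
    cases j with
    | zero =>
      calc orbitCoord c (n + 1) 0 * 2 ^ (n + 1) = c (0 + 1) * (orbitCoord c n 1 * 2 ^ n) := by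
            rw [orbitCoord]; ring
        _ ≤ ballot (n + 1) 0 := ballot_succ_zero n ▸ hle 0 1
    | succ j =>
      calc orbitCoord c (n + 1) (j + 1) * 2 ^ (n + 1)
          = c (j + 1) * (orbitCoord c n j * 2 ^ n)
            + c (j + 1 + 1) * (orbitCoord c n (j + 2) * 2 ^ n) := by rw [orbitCoord]; ring
        _ ≤ ballot (n + 1) (j + 1) :=
          ballot_succ_succ n j ▸ add_le_add (hle j j) (hle (j + 1) _)

namespace WeightedShift

variable {c : ℕ → ℝ} {R : ell2 →L[ℂ] ell2}
  (hR : ∀ k, R (e k) = (c (k + 1) : ℂ) • e (k + 1))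
include hR

lemma adjoint_apply_coord (w : ell2) (k : ℕ) :
    ContinuousLinearMap.adjoint R w k = c (k + 1) * w (k + 1) := by
  rw [← inner_e_left, ContinuousLinearMap.adjoint_inner_right, hR, inner_smul_left,
    inner_e_left, Complex.conj_ofReal]

lemma adjoint_apply_e_zero : ContinuousLinearMap.adjoint R (e 0) = 0 := by
  ext k
  simp [adjoint_apply_coord hR, e_apply]

lemma adjoint_apply_e_succ (j : ℕ) :
    ContinuousLinearMap.adjoint R (e (j + 1)) = (c (j + 1) : ℂ) • e j := by
  ext k
  rw [adjoint_apply_coord hR, lp.coeFn_smul, Pi.smul_apply, e_apply, e_apply]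
  by_cases hk : k = j <;> simp [hk]

lemma apply_coord_zero (w : ell2) : R w 0 = 0 := by
  rw [← inner_e_left, ← ContinuousLinearMap.adjoint_inner_left, adjoint_apply_e_zero hR,
    inner_zero_left]

lemma apply_coord_succ (w : ell2) (k : ℕ) : R w (k + 1) = c (k + 1) * w k := by
  rw [← inner_e_left, ← ContinuousLinearMap.adjoint_inner_left, adjoint_apply_e_succ hR,
    inner_smul_left, inner_e_left, Complex.conj_ofReal]

lemma norm_le_one (hc : ∀ k, |c (k + 1)| ≤ 1) : ‖R‖ ≤ 1 := by
  refine R.opNorm_le_bound zero_le_one fun w => ?_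
  rw [one_mul]
  have hp : 0 < (2 : ENNReal).toReal := by norm_num
  have hRw := (lp.hasSum_norm hp (R w)).summable
  refine lp.norm_le_of_tsum_le hp (norm_nonneg w) ?_
  rw [hRw.tsum_eq_zero_add, apply_coord_zero hR, norm_zero, Real.zero_rpow hp.ne', zero_add,
    ← (lp.hasSum_norm hp w).tsum_eq]
  refine ((summable_nat_add_iff 1).2 hRw).tsum_le_tsum (fun k => ?_) (lp.hasSum_norm hp w).summable
  rw [apply_coord_succ hR, norm_mul, Complex.norm_real, Real.norm_eq_abs]
  gcongr
  exact mul_le_of_le_one_left (norm_nonneg _) (hc k)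

lemma realPart_apply_coord (w : ell2) (j : ℕ) :
    (realPart R : ell2 →L[ℂ] ell2) w j = 2⁻¹ * (R w j + c (j + 1) * w (j + 1)) := by
  rw [← inv_two_smul_add_adjoint_eq_realPart, smul_apply, lp.coeFn_smul, Pi.smul_apply,
    add_apply, lp.coeFn_add, Pi.add_apply, adjoint_apply_coord hR, smul_eq_mul]

lemma realPart_pow_apply_e_zero_coord (n j : ℕ) :
    ((realPart R : ell2 →L[ℂ] ell2) ^ n) (e 0) j = orbitCoord c n j := by
  induction n generalizing j with
  | zero => simp [orbitCoord, e_apply, apply_ite]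
  | succ n ih =>
    rw [pow_succ', mul_apply_eq_comp, realPart_apply_coord hR]
    cases j with
    | zero => simp only [apply_coord_zero hR, ih, orbitCoord]; push_cast; ring
    | succ j => simp only [apply_coord_succ hR, ih, orbitCoord]; push_cast; ring

lemma re_inner_e_zero_realPart_pow_two_mul_le (hc : ∀ k, 0 ≤ c (k + 1) ∧ c (k + 1) ≤ 1)
    (k : ℕ) :
    (⟪e 0, ((realPart R : ell2 →L[ℂ] ell2) ^ (2 * k)) (e 0)⟫_ℂ).re
      ≤ ((k : ℝ) + 1) ^ (-(3 / 2 : ℝ)) := by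
  rw [inner_e_left, realPart_pow_apply_e_zero_coord hR, Complex.ofReal_re]
  calc orbitCoord c (2 * k) 0 ≤ ballot (2 * k) 0 / 2 ^ (2 * k) :=
        (le_div_iff₀ (by positivity)).2 (orbitCoord_mul_two_pow_le_ballot hc _ _)
    _ = catalan k / 4 ^ k := by rw [ballot_two_mul_zero, pow_mul]; norm_num
    _ ≤ ((k : ℝ) + 1) ^ (-(3 / 2 : ℝ)) := catalan_div_four_pow_le k

end WeightedShift

lemma cast_harmonic_nonneg (n : ℕ) : (0 : ℝ) ≤ harmonic n :=
  (Real.log_nonneg (by simp)).trans (log_add_one_le_harmonic n)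

lemma hasSum_add_harmonic_mul_pow {u : ℝ} (hu : |u| < 1) (A : ℝ) :
    HasSum (fun n => (A + harmonic n) * u ^ n) ((A - log (1 - u)) / (1 - u)) := by
  set g : ℕ → ℝ := fun n => (A + harmonic n) * u ^ n
  have hg : Summable g := by
    have hu' : ‖|u|‖ < 1 := by rwa [Real.norm_eq_abs, abs_abs]
    refine Summable.of_norm_bounded (g := fun n => (|A| + 1) * |u| ^ n + n * |u| ^ n)
      (((summable_geometric_of_lt_one (abs_nonneg u) hu).mul_left _).add
        (by simpa using summable_pow_mul_geometric_of_norm_lt_one 1 hu')) fun n => ?_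
    have h1 : (harmonic n : ℝ) ≤ 1 + n :=
      (harmonic_le_one_add_log n).trans
        (by linarith [Real.log_le_self (Nat.cast_nonneg (α := ℝ) n)])
    rw [norm_mul, norm_pow, Real.norm_eq_abs, Real.norm_eq_abs]
    have : |A + harmonic n| ≤ |A| + 1 + n :=
      (abs_add_le _ _).trans (by rw [abs_of_nonneg (cast_harmonic_nonneg n)]; linarith)
    nlinarith [pow_nonneg (abs_nonneg u) n]
  have hshift : HasSum (fun n => g (n + 1) - u * g n) (∑' n, g n - A - u * ∑' n, g n) := by
    have := ((hasSum_nat_add_iff' 1).2 hg.hasSum).sub (hg.hasSum.mul_left u)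
    simpa [g] using this
  have hlog : HasSum (fun n => g (n + 1) - u * g n) (-log (1 - u)) := by
    convert Real.hasSum_pow_div_log_of_abs_lt_one hu using 2 with n
    simp only [g, harmonic_succ]
    push_cast
    field_simp
    ring
  have h1u : 1 - u ≠ 0 := by linarith [le_abs_self u]
  convert hg.hasSum
  rw [div_eq_iff h1u]
  linarith [hshift.unique hlog]

lemma summable_add_harmonic_mul_rpow :
    Summable fun k : ℕ => (log 2 + harmonic k) * ((k : ℝ) + 1) ^ (-(3 / 2 : ℝ)) := by
  have hp : Summable fun k : ℕ => 6 * ((k : ℝ) + 1) ^ (-(5 / 4 : ℝ)) := by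
    refine .mul_left 6 ?_
    exact_mod_cast (summable_nat_add_iff 1).2
      (Real.summable_nat_rpow.2 (by norm_num : -(5 / 4 : ℝ) < -1))
  refine hp.of_nonneg_of_le (fun k => mul_nonneg (add_nonneg (Real.log_nonneg one_le_two)
    (cast_harmonic_nonneg k)) (by positivity)) fun k => ?_
  have hk : (0 : ℝ) < k + 1 := by positivity
  have hr : 1 ≤ ((k : ℝ) + 1) ^ (1 / 4 : ℝ) := Real.one_le_rpow (by linarith) (by norm_num)
  have hlog : log k ≤ 4 * ((k : ℝ) + 1) ^ (1 / 4 : ℝ) := by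
    refine (Real.log_le_rpow_div (Nat.cast_nonneg k) (by norm_num : (0 : ℝ) < 1 / 4)).trans ?_
    rw [div_eq_mul_inv, mul_comm]
    gcongr <;> norm_num
  calc (log 2 + harmonic k) * ((k : ℝ) + 1) ^ (-(3 / 2 : ℝ))
      ≤ (6 * ((k : ℝ) + 1) ^ (1 / 4 : ℝ)) * ((k : ℝ) + 1) ^ (-(3 / 2 : ℝ)) := by
        gcongr
        linarith [harmonic_le_one_add_log k, Real.log_two_lt_d9]
    _ = 6 * ((k : ℝ) + 1) ^ (-(5 / 4 : ℝ)) := by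
        rw [mul_assoc, ← Real.rpow_add hk]; norm_num

lemma abs_log_one_sub_div_le {t : ℝ} (ht : t ∈ Ioo (-1 : ℝ) 1) :
    |log (1 - t) / (1 - t ^ 2)| ≤ (log 2 - log (1 - t ^ 2)) / (1 - t ^ 2) := by
  obtain ⟨ht1, ht2⟩ := ht
  have hsq : 0 < 1 - t ^ 2 := by nlinarith
  have h1 : log (1 - t ^ 2) ≤ log 2 + log (1 - t) := by
    rw [← Real.log_mul two_ne_zero (by linarith)]
    exact Real.log_le_log hsq (by nlinarith)
  have h2 : log (1 - t) ≤ log 2 := Real.log_le_log (by linarith) (by linarith)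
  have h3 : log (1 - t ^ 2) ≤ 0 := Real.log_nonpos hsq.le (by nlinarith)
  rw [abs_div, abs_of_pos hsq]
  gcongr
  rw [abs_le]
  constructor <;> linarith

lemma enorm_log_one_sub_div_le_tsum {t : ℝ} (ht : t ∈ Ioo (-1 : ℝ) 1) :
    ‖log (1 - t) / (1 - t ^ 2)‖ₑ
      ≤ ∑' k, ENNReal.ofReal ((log 2 + harmonic k) * t ^ (2 * k)) := by
  have hu : |t ^ 2| < 1 := by rw [abs_of_nonneg (sq_nonneg t)]; nlinarith [ht.1, ht.2]
  have hsum := hasSum_add_harmonic_mul_pow hu (log 2)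
  simp_rw [← pow_mul] at hsum
  rw [Real.enorm_eq_ofReal_abs, ← ENNReal.ofReal_tsum_of_nonneg (fun k => mul_nonneg
    (add_nonneg (Real.log_nonneg one_le_two) (cast_harmonic_nonneg k))
    ((even_two_mul k).pow_nonneg t)) hsum.summable, hsum.tsum_eq]
  exact ENNReal.ofReal_le_ofReal (abs_log_one_sub_div_le ht)

lemma integrable_pow_of_measure_compl_Icc_eq_zero {μ : Measure ℝ} [IsFiniteMeasure μ]
    (hsupp : μ (Icc (-1 : ℝ) 1)ᶜ = 0) (n : ℕ) : Integrable (fun t => t ^ n) μ := by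
  refine .of_bound (by fun_prop) 1 ?_
  filter_upwards [mem_ae_iff.2 hsupp] with t ht
  rw [norm_pow, Real.norm_eq_abs]
  exact pow_le_one₀ (abs_nonneg t) (abs_le.2 ht)

lemma integrableOn_log_one_sub_div_of_even_moment_le {μ : Measure ℝ} {b : ℕ → ℝ}
    (hint : ∀ k, Integrable (fun t => t ^ (2 * k)) μ)
    (hmom : ∀ k, ∫ t, t ^ (2 * k) ∂μ ≤ b k)
    (hb : Summable fun k => (log 2 + harmonic k) * b k) :
    IntegrableOn (fun t => log (1 - t) / (1 - t ^ 2)) (Ioo (-1) 1) μ := by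
  set a : ℕ → ℝ := fun k => log 2 + harmonic k
  have ha (k : ℕ) : 0 ≤ a k := add_nonneg (Real.log_nonneg one_le_two) (cast_harmonic_nonneg k)
  have hab (k : ℕ) : 0 ≤ a k * b k :=
    mul_nonneg (ha k) ((integral_nonneg fun t => (even_two_mul k).pow_nonneg t).trans (hmom k))
  refine ⟨ContinuousOn.aestronglyMeasurable ?_ measurableSet_Ioo, ?_⟩
  · refine ContinuousOn.div (ContinuousOn.log (by fun_prop) fun t ht => ?_) (by fun_prop)
      fun t ht => ?_
    · linarith [ht.2]
    · nlinarith [ht.1, ht.2]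
  rw [HasFiniteIntegral]
  calc ∫⁻ t in Ioo (-1) 1, ‖log (1 - t) / (1 - t ^ 2)‖ₑ ∂μ
      ≤ ∫⁻ t in Ioo (-1) 1, ∑' k, ENNReal.ofReal (a k * t ^ (2 * k)) ∂μ :=
        setLIntegral_mono' measurableSet_Ioo fun _ => enorm_log_one_sub_div_le_tsum
    _ ≤ ∫⁻ t, ∑' k, ENNReal.ofReal (a k * t ^ (2 * k)) ∂μ :=
        setLIntegral_le_lintegral _ _
    _ = ∑' k, ENNReal.ofReal (a k * ∫ t, t ^ (2 * k) ∂μ) := by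
        rw [lintegral_tsum fun k => by fun_prop]
        congr 1 with k
        rw [← integral_const_mul, ofReal_integral_eq_lintegral_ofReal ((hint k).const_mul _)
          (.of_forall fun t => mul_nonneg (ha k) ((even_two_mul k).pow_nonneg t))]
    _ ≤ ∑' k, ENNReal.ofReal (a k * b k) := by
        gcongr with k
        · exact ha k
        · exact hmom k
    _ = ENNReal.ofReal (∑' k, a k * b k) := (ENNReal.ofReal_tsum_of_nonneg hab hb).symm
    _ < ⊤ := ENNReal.ofReal_lt_top

theorem shift_spectral_measure_integrable_general (c : ℕ → ℝ)
    (hc : ∀ k : ℕ, 0 < c (k + 1) ∧ c (k + 1) ≤ 1)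
    (R : ell2 →L[ℂ] ell2)
    (hR : ∀ k : ℕ, R (e k) = (c (k + 1) : ℂ) • e (k + 1))
    (T : ell2 →L[ℂ] ell2)
    (hT : T = ((2 : ℂ)⁻¹) • (R + ContinuousLinearMap.adjoint R))
    (μ : Measure ℝ) [IsFiniteMeasure μ]
    (hsupp : μ (Set.Icc (-1 : ℝ) 1)ᶜ = 0)
    (hmom : ∀ n : ℕ, ∫ t, t ^ n ∂μ = (⟪e 0, (T ^ n) (e 0)⟫_ℂ).re) :
    IsSelfAdjoint T ∧ ‖T‖ ≤ 1 ∧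
    IntegrableOn (fun t : ℝ => Real.log (1 - t) / (1 - t ^ 2)) (Set.Ioo (-1 : ℝ) 1) μ := by
  have hTR : T = realPart R := hT.trans (inv_two_smul_add_adjoint_eq_realPart R)
  subst hTR
  refine ⟨(realPart R).2, (realPart.norm_le R).trans
    (WeightedShift.norm_le_one hR fun k => abs_le.2 ⟨by linarith [(hc k).1], (hc k).2⟩), ?_⟩
  refine integrableOn_log_one_sub_div_of_even_moment_le
    (fun k => integrable_pow_of_measure_compl_Icc_eq_zero hsupp _) (fun k => ?_)
    summable_add_harmonic_mul_rpow
  rw [hmom]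
  exact WeightedShift.re_inner_e_zero_realPart_pow_two_mul_le hR
    (fun k => ⟨(hc k).1.le, (hc k).2⟩) k

/-- Let `R` be a weighted unilateral shift with weights in `(0,1]` and `T = (R + R*)/2`.
If `e₀` lies in the range of `√(1 - T²)` and `μ` is the spectral measure of `T` in the vector
state given by `e₀` (a finite measure on `[-1,1]` determined by the moment conditions), then
`t ↦ log(1−t)/(1−t²)` is `μ`-integrable on `(-1, 1)`.  Moreover `T` is a self-adjoint
contraction. -/
theorem shift_spectral_measure_integrable (c : ℕ → ℝ)
    (hc : ∀ k : ℕ, 0 < c (k + 1) ∧ c (k + 1) ≤ 1)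
    (R : ell2 →L[ℂ] ell2)
    (hR : ∀ k : ℕ, R (e k) = (c (k + 1) : ℂ) • e (k + 1))
    (T : ell2 →L[ℂ] ell2)
    (hT : T = ((2 : ℂ)⁻¹) • (R + ContinuousLinearMap.adjoint R))
    (he : ∃ ζ : ell2, (CFC.sqrt (1 - T ^ 2) : ell2 →L[ℂ] ell2) ζ = e 0)
    (μ : Measure ℝ) [IsFiniteMeasure μ]
    (hsupp : μ (Set.Icc (-1 : ℝ) 1)ᶜ = 0)
    (hmom : ∀ n : ℕ, ∫ t, t ^ n ∂μ = (⟪e 0, (T ^ n) (e 0)⟫_ℂ).re) :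
    IsSelfAdjoint T ∧ ‖T‖ ≤ 1 ∧
    IntegrableOn (fun t : ℝ => Real.log (1 - t) / (1 - t ^ 2)) (Set.Ioo (-1 : ℝ) 1) μ :=
  shift_spectral_measure_integrable_general c hc R hR T hT μ hsupp hmom
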